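/- Let λ be a Young diagram and let c be any removable cell of λ. Then ∑_{m ∈ AC(λ)} cont(m) · [∏_{w ∈ RC(λ)\{c}} (cont(m) - cont(w))] / [∏_{v ∈ AC(λ)\{m}} (cont(m) - cont(v))] = 1. -/

import Mathlib

/-- The number of standard Young tableaux of shape `μ`, encoded as the number of
saturated chains `⊥ = T 0 ⊆ T 1 ⊆ ⋯ ⊆ T |μ| = μ` in the Young lattice in which each
step adds exactly one cell. -/
noncomputable def sytCount (μ : YoungDiagram) : ℕ :=
  Nat.card {T : Fin (μ.card + 1) → YoungDiagram //
    T 0 = ⊥ ∧ T (Fin.last μ.card) = μ ∧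
    ∀ i : Fin μ.card, T i.castSucc ≤ T i.succ ∧
      (T i.succ).card = (T i.castSucc).card + 1}

/-- The number of semistandard Young tableaux of shape `μ` with entries in
`{0, 1, …, d-1}` (i.e. `d` allowed symbols). -/
noncomputable def ssytCount (μ : YoungDiagram) (d : ℕ) : ℕ :=
  Nat.card {T : SemistandardYoungTableau μ // ∀ i j : ℕ, (i, j) ∈ μ → T i j < d}

/-- A cell `c` is addable to `μ` if it is not in `μ` and adding it yields a valid
Young diagram. -/
def IsAddableCell (μ : YoungDiagram) (c : ℕ × ℕ) : Prop :=
  c ∉ μ ∧ ∃ ν : YoungDiagram, ν.cells = insert c μ.cells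

/-- A cell `c` is removable from `μ` if it is in `μ` and removing it yields a valid
Young diagram. -/
def IsRemovableCell (μ : YoungDiagram) (c : ℕ × ℕ) : Prop :=
  c ∈ μ ∧ ∃ ν : YoungDiagram, ν.cells = μ.cells.erase c

/-- The content `j - i` of a cell `(i, j)`, as a rational number. -/
def contQ (c : ℕ × ℕ) : ℚ := (c.2 : ℚ) - (c.1 : ℚ)

/-!
Every addable cell ends its row, and apart from the one ending row `0` the addable cells sit just
below the removable ones; so `|AC(λ)| = |RC(λ)| + 1`, and the contents of addable cells strictly
decrease down the rows, hence are distinct. The polynomial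
`P(x) = x · ∏_{w ∈ RC(λ) \ {c}} (x - cont w)` is monic of degree `|AC(λ)| - 1`, so Lagrange
interpolation at the contents of the addable cells recovers its leading coefficient `1` as the sum
in question.
-/

open Finset Polynomial

section LowerSet

variable {α : Type*} [PartialOrder α] {s : Set α} {a : α}

theorem IsLowerSet.isLowerSet_insert_iff (hs : IsLowerSet s) :
    IsLowerSet (insert a s) ↔ ∀ b < a, b ∈ s := by
  refine ⟨fun h b hba => ?_, fun h b c hcb hb => ?_⟩
  · exact (h hba.le (Set.mem_insert a s)).resolve_left hba.ne
  · rcases hb with rfl | hb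
    · exact hcb.eq_or_lt.imp id (h c)
    · exact Or.inr (hs hcb hb)

theorem IsLowerSet.isLowerSet_diff_singleton_iff (hs : IsLowerSet s) :
    IsLowerSet (s \ {a}) ↔ ∀ b, a < b → b ∉ s := by
  refine ⟨fun h b hab hb => ?_, fun h => hs.erase fun b hb hab => ?_⟩
  · exact (h hab.le ⟨hb, hab.ne'⟩).2 rfl
  · by_contra hne
    exact h b (lt_of_le_of_ne hab (Ne.symm hne)) hb

end LowerSet

section NatProd

variable {s : Set (ℕ × ℕ)} {i j : ℕ}

theorem IsLowerSet.forall_lt_mem_iff (hs : IsLowerSet s) :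
    (∀ b < (i, j), b ∈ s) ↔ (i = 0 ∨ (i - 1, j) ∈ s) ∧ (j = 0 ∨ (i, j - 1) ∈ s) := by
  refine ⟨fun h => ⟨?_, ?_⟩, fun ⟨hi, hj⟩ ⟨b₁, b₂⟩ hb => ?_⟩
  · refine or_iff_not_imp_left.2 fun hi => h _ ?_
    exact Prod.lt_iff.2 (Or.inl ⟨by simp only; omega, le_rfl⟩)
  · refine or_iff_not_imp_left.2 fun hj => h _ ?_
    exact Prod.lt_iff.2 (Or.inr ⟨le_rfl, by simp only; omega⟩)
  · rcases Prod.lt_iff.1 hb with ⟨hb₁, hb₂⟩ | ⟨hb₁, hb₂⟩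
    · exact hs (Prod.mk_le_mk.2 ⟨by simp only at hb₁; omega, hb₂⟩) (hi.resolve_left (by omega))
    · exact hs (Prod.mk_le_mk.2 ⟨hb₁, by simp only at hb₂; omega⟩) (hj.resolve_left (by omega))

theorem IsLowerSet.forall_gt_notMem_iff (hs : IsLowerSet s) :
    (∀ b, (i, j) < b → b ∉ s) ↔ (i + 1, j) ∉ s ∧ (i, j + 1) ∉ s := by
  refine ⟨fun h => ⟨h _ (Prod.lt_iff.2 (Or.inl ⟨by simp, le_rfl⟩)),
    h _ (Prod.lt_iff.2 (Or.inr ⟨le_rfl, by simp⟩))⟩, fun ⟨hi, hj⟩ b hb hbs => ?_⟩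
  rcases Prod.lt_iff.1 hb with ⟨hb₁, hb₂⟩ | ⟨hb₁, hb₂⟩
  · exact hi (hs (Prod.mk_le_mk.2 ⟨hb₁, hb₂⟩) hbs)
  · exact hj (hs (Prod.mk_le_mk.2 ⟨hb₁, hb₂⟩) hbs)

end NatProd

namespace YoungDiagram

variable {μ : YoungDiagram} {i j : ℕ}

theorem exists_cells_eq_iff {s : Finset (ℕ × ℕ)} :
    (∃ ν : YoungDiagram, ν.cells = s) ↔ IsLowerSet (s : Set (ℕ × ℕ)) :=
  ⟨fun ⟨ν, hν⟩ => hν ▸ ν.isLowerSet, fun h => ⟨⟨s, h⟩, rfl⟩⟩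

theorem rowLen_pos_iff : 0 < μ.rowLen i ↔ i < μ.colLen 0 := by
  rw [← mem_iff_lt_rowLen, mem_iff_lt_colLen]

theorem isAddableCell_iff :
    IsAddableCell μ (i, j) ↔ j = μ.rowLen i ∧ (i = 0 ∨ j < μ.rowLen (i - 1)) := by
  rw [IsAddableCell, exists_cells_eq_iff, coe_insert, μ.isLowerSet.isLowerSet_insert_iff,
    μ.isLowerSet.forall_lt_mem_iff]
  simp only [mem_coe, mem_cells, mem_iff_lt_rowLen]
  omega

theorem isRemovableCell_iff :
    IsRemovableCell μ (i, j) ↔ μ.rowLen (i + 1) < μ.rowLen i ∧ j + 1 = μ.rowLen i := by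
  rw [IsRemovableCell, exists_cells_eq_iff, coe_erase, μ.isLowerSet.isLowerSet_diff_singleton_iff,
    μ.isLowerSet.forall_gt_notMem_iff]
  simp only [mem_coe, mem_cells, mem_iff_lt_rowLen]
  omega

theorem strictAnti_contQ_rowLen (μ : YoungDiagram) :
    StrictAnti fun i => contQ (i, μ.rowLen i) := by
  intro a b hab
  have : (μ.rowLen b : ℚ) ≤ μ.rowLen a := by exact_mod_cast μ.rowLen_anti a b hab.le
  simp only [contQ]
  linarith [show (a : ℚ) < b by exact_mod_cast hab]

theorem injOn_contQ_addableCell (μ : YoungDiagram) :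
    Set.InjOn contQ {c | IsAddableCell μ c} := by
  rintro ⟨i, j⟩ hij ⟨i', j'⟩ hij' h
  obtain ⟨rfl, -⟩ := isAddableCell_iff.1 hij
  obtain ⟨rfl, -⟩ := isAddableCell_iff.1 hij'
  rw [(μ.strictAnti_contQ_rowLen).injective h]

def removableRows (μ : YoungDiagram) : Finset ℕ :=
  {i ∈ range (μ.colLen 0) | μ.rowLen (i + 1) < μ.rowLen i}

noncomputable def removableCells (μ : YoungDiagram) : Finset (ℕ × ℕ) :=
  μ.removableRows.image fun i => (i, μ.rowLen i - 1)

/-- Below each removable row `i` the end of row `i + 1` is addable; the only other addable cell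
ends row `0`. -/
noncomputable def addableCells (μ : YoungDiagram) : Finset (ℕ × ℕ) :=
  insert (0, μ.rowLen 0) (μ.removableRows.image fun i => (i + 1, μ.rowLen (i + 1)))

theorem mem_removableRows : i ∈ μ.removableRows ↔ μ.rowLen (i + 1) < μ.rowLen i := by
  rw [removableRows, mem_filter, mem_range, ← rowLen_pos_iff]
  omega

theorem coe_removableCells : (μ.removableCells : Set (ℕ × ℕ)) = {c | IsRemovableCell μ c} := by
  ext ⟨i, j⟩
  simp only [removableCells, coe_image, Set.mem_image, mem_coe, mem_removableRows,
    Prod.mk.injEq, Set.mem_ofPred_eq, isRemovableCell_iff]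
  constructor
  · rintro ⟨i, hi, rfl, rfl⟩
    exact ⟨hi, by omega⟩
  · rintro ⟨hi, hj⟩
    exact ⟨i, hi, rfl, by omega⟩

theorem coe_addableCells : (μ.addableCells : Set (ℕ × ℕ)) = {c | IsAddableCell μ c} := by
  ext ⟨i, j⟩
  simp only [addableCells, coe_insert, coe_image, Set.mem_insert_iff, Set.mem_image, mem_coe,
    mem_removableRows, Prod.mk.injEq, Set.mem_ofPred_eq, isAddableCell_iff]
  rcases i with _ | i
  · simp
  · simp only [Nat.add_one_ne_zero, false_and, false_or, add_tsub_cancel_right, add_left_inj]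
    constructor
    · rintro ⟨i, hi, rfl, rfl⟩
      exact ⟨rfl, hi⟩
    · rintro ⟨rfl, hi⟩
      exact ⟨i, hi, rfl, rfl⟩

theorem card_addableCells (μ : YoungDiagram) : #μ.addableCells = #μ.removableCells + 1 := by
  rw [addableCells, card_insert_of_notMem (by simp), removableCells,
    card_image_of_injective _ fun a b h => by simpa using congrArg Prod.fst h,
    card_image_of_injective _ fun a b h => congrArg Prod.fst h]

end YoungDiagram

open YoungDiagram in
/-- For any Young diagram `λ` and any removable cell `c` of `λ`:
`∑_{m ∈ AC(λ)} cont(m) · ∏_{w ∈ RC(λ)\{c}} (cont m - cont w) /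
  ∏_{v ∈ AC(λ)\{m}} (cont m - cont v) = 1`. -/
theorem content_ratio_sum_one (lam : YoungDiagram) (c : ℕ × ℕ)
    (hc : IsRemovableCell lam c) :
    ∑ᶠ m ∈ {m | IsAddableCell lam m},
      contQ m *
        ((∏ᶠ w ∈ {w | IsRemovableCell lam w} \ {c}, (contQ m - contQ w)) /
          (∏ᶠ v ∈ {v | IsAddableCell lam v} \ {m}, (contQ m - contQ v))) = 1 := by
  classical
  have hcR : c ∈ lam.removableCells := by rw [← mem_coe, coe_removableCells]; exact hc
  set P : ℚ[X] := X * Lagrange.nodal (lam.removableCells.erase c) contQ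
  have hdeg : (#lam.addableCells : WithBot ℕ) = P.degree + 1 := by
    simp only [P]
    rw [degree_mul, degree_X, Lagrange.degree_nodal, card_erase_of_mem hcR, card_addableCells]
    have := card_pos.2 ⟨c, hcR⟩
    norm_cast
    omega
  rw [← coe_addableCells, ← coe_removableCells, ← coe_erase, finsum_mem_coe_finset]
  calc _ = ∑ m ∈ lam.addableCells,
        P.eval (contQ m) / ∏ v ∈ lam.addableCells.erase m, (contQ m - contQ v) := by
        refine sum_congr rfl fun m _ => ?_
        rw [finprod_mem_coe_finset, ← coe_erase, finprod_mem_coe_finset, eval_mul, eval_X,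
          Lagrange.eval_nodal, mul_div_assoc]
    _ = P.leadingCoeff :=
        (Lagrange.leadingCoeff_eq_sum (coe_addableCells ▸ lam.injOn_contQ_addableCell) hdeg).symm
    _ = 1 := (monic_X.mul Lagrange.nodal_monic).leadingCoeff
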